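/- arXiv:2004.00474 — 4 statements merged into one kernel-verified Lean document; each statement's English description precedes it below -/
import Mathlib

section
/- For any integers i ≥ 1 and t ≥ 0, the determinant of the (t+1)×(t+1) matrix D(i,t) with entries D(i,t)_{p,q} = 1/(i + 2(p-1) + 2(q-1)) is positive. -/
/-!
Since `1 / (n + 1) = ∫₀¹ xⁿ dx`, the matrix is the Gram matrix of the monomials `x ^ (2p)` for
the inner product `⟪f, g⟫ = ∫₀¹ x ^ (i - 1) f(x) g(x) dx`. Its quadratic form at `v ≠ 0` is
`∫₀¹ x ^ (i - 1) P(x)² dx` for the nonzero polynomial `P = ∑ v_p X ^ (2p)`, which is positive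
because `P` has only finitely many roots. So the matrix is positive definite.
-/

open Polynomial intervalIntegral Matrix

theorem integral_pow_mul_eval_sq_pos (k : ℕ) {P : ℝ[X]} (hP : P ≠ 0) :
    0 < ∫ x in (0 : ℝ)..1, x ^ k * P.eval x ^ 2 := by
  obtain ⟨c, hc, hroot⟩ :=
    (Set.Ioc_infinite (zero_lt_one' ℝ)).exists_notMem_finset P.roots.toFinset
  have hPc : P.eval c ≠ 0 := fun h => hroot (by simp [hP, h])
  have hc0 : 0 < c := hc.1
  refine integral_pos zero_lt_one (by fun_prop) (fun x hx => ?_)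
    ⟨c, Set.Ioc_subset_Icc_self hc, by positivity⟩
  have hx0 : 0 ≤ x := hx.1.le
  positivity

theorem coeff_sum_C_mul_X_pow {R ι : Type*} [Semiring R] [Fintype ι] {e : ι → ℕ}
    (he : e.Injective) (v : ι → R) (q : ι) :
    (∑ p, C (v p) * X ^ e p).coeff (e q) = v q := by
  classical
  simp [finsetSum_coeff, he.eq_iff]

theorem inv_natCast_succ_eq_integral_pow (n : ℕ) :
    ((n + 1 : ℕ) : ℝ)⁻¹ = ∫ x in (0 : ℝ)..1, x ^ n := by
  simp [integral_pow]

section Moments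

variable {ι : Type*} [Fintype ι]

theorem dotProduct_mulVec_inv_natCast_add_eq_integral (m : ℕ) (e : ι → ℕ) (v : ι → ℝ) :
    v ⬝ᵥ (of (fun p q => ((m + e p + e q + 1 : ℕ) : ℝ)⁻¹) *ᵥ v) =
      ∫ x in (0 : ℝ)..1, x ^ m * (∑ p, C (v p) * X ^ e p).eval x ^ 2 := by
  have hint : ∀ p q, IntervalIntegrable
      (fun x : ℝ => v p * v q * x ^ (m + e p + e q)) MeasureTheory.volume 0 1 :=
    fun p q => (by fun_prop : Continuous _).intervalIntegrable 0 1
  calc v ⬝ᵥ (of (fun p q => ((m + e p + e q + 1 : ℕ) : ℝ)⁻¹) *ᵥ v)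
      = ∑ p, ∑ q, ∫ x in (0 : ℝ)..1, v p * v q * x ^ (m + e p + e q) := by
        simp only [dotProduct, mulVec, of_apply, integral_const_mul, Finset.mul_sum,
          ← inv_natCast_succ_eq_integral_pow]
        refine Finset.sum_congr rfl fun p _ => Finset.sum_congr rfl fun q _ => ?_
        ring
    _ = ∫ x in (0 : ℝ)..1, ∑ p, ∑ q, v p * v q * x ^ (m + e p + e q) := by
        rw [integral_finsetSum fun p _ => (by fun_prop : Continuous fun x : ℝ =>
          ∑ q, v p * v q * x ^ (m + e p + e q)).intervalIntegrable 0 1]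
        exact Finset.sum_congr rfl fun p _ => (integral_finsetSum fun q _ => hint p q).symm
    _ = _ := by
        congr 1 with x
        simp only [eval_finsetSum, eval_mul, eval_C, eval_pow, eval_X]
        rw [sq, Finset.sum_mul_sum]
        simp only [Finset.mul_sum]
        refine Finset.sum_congr rfl fun p _ => Finset.sum_congr rfl fun q _ => ?_
        ring

theorem posDef_inv_natCast_add (m : ℕ) {e : ι → ℕ} (he : e.Injective) :
    (of fun p q => ((m + e p + e q + 1 : ℕ) : ℝ)⁻¹).PosDef := by
  refine .of_dotProduct_mulVec_pos ?_ fun v hv => ?_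
  · ext p q
    simp [add_right_comm]
  · rw [star_trivial, dotProduct_mulVec_inv_natCast_add_eq_integral]
    refine integral_pow_mul_eval_sq_pos m fun hP => ?_
    obtain ⟨q, hq⟩ := Function.ne_iff.mp hv
    exact hq (by simpa [hP] using (coeff_sum_C_mul_X_pow he v q).symm)

end Moments

theorem stmt_1 (i : ℕ) (hi : 1 ≤ i) (t : ℕ) :
    0 < Matrix.det (fun p q : Fin (t + 1) =>
      (1 : ℝ) / (i + 2 * (p : ℕ) + 2 * (q : ℕ))) := by
  obtain ⟨m, rfl⟩ := Nat.exists_eq_add_of_le' hi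
  have hinj : (fun p : Fin (t + 1) => 2 * (p : ℕ)).Injective :=
    fun p q h => Fin.ext (by simpa using h)
  calc 0 < (of fun p q : Fin (t + 1) => ((m + 2 * p + 2 * q + 1 : ℕ) : ℝ)⁻¹).det :=
        (posDef_inv_natCast_add m hinj).det_pos
    _ = _ := by
        congr 1 with p q
        simp only [of_apply, one_div]
        push_cast
        ring
end

section
/- For any integer k ≥ 0, the determinant of the (k+1)×(k+1) matrix Ã_{k+1} with entries ã_{r,s} = (1 - (-1)^{r+s-1})/(2(r+s-1)) is positive. -/
/-!
The entry `(1 - (-1)^(r+s+1)) / (2(r+s+1))` is `½ ∫_{-1}^{1} t^(r+s) dt`, so the matrix is half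
the Gram matrix of the monomials `1, t, …, t^k` for the `L²` inner product on `[-1, 1]`. Its
quadratic form at `x` is `½ ∫_{-1}^{1} p(t)² dt` with `p = ∑ xᵢ tⁱ`, which is positive when
`x ≠ 0` because a nonzero polynomial vanishes at only finitely many points of the interval.
Hence the matrix is positive definite and its determinant is positive.
-/

open Polynomial Matrix intervalIntegral

namespace Polynomial

lemma eval_ofFn {R : Type*} [CommSemiring R] [DecidableEq R] {n : ℕ} (v : Fin n → R) (t : R) :
    (ofFn n v).eval t = ∑ i, v i * t ^ (i : ℕ) := by
  simp [ofFn_eq_sum_monomial, eval_finsetSum]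

lemma integral_eval_sq_pos {a b : ℝ} (hab : a < b) {p : ℝ[X]} (hp : p ≠ 0) :
    0 < ∫ t in a..b, p.eval t ^ 2 := by
  obtain ⟨c, hc, hroot⟩ := (Set.Icc_infinite hab).exists_notMem_finset p.roots.toFinset
  have hc0 : p.eval c ≠ 0 := fun h => hroot (by simpa [hp] using h)
  exact integral_pos hab (by fun_prop) (fun t _ => sq_nonneg _) ⟨c, hc, by positivity⟩

end Polynomial

noncomputable def momentMatrix (a b : ℝ) (n : ℕ) : Matrix (Fin n) (Fin n) ℝ :=
  of fun r s => ∫ t in a..b, t ^ ((r : ℕ) + s)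

lemma dotProduct_momentMatrix_mulVec (a b : ℝ) {n : ℕ} (x : Fin n → ℝ) :
    x ⬝ᵥ (momentMatrix a b n *ᵥ x) = ∫ t in a..b, (ofFn n x).eval t ^ 2 := by
  have hsq : ∀ t : ℝ,
      (ofFn n x).eval t ^ 2 = ∑ r : Fin n, ∑ s : Fin n, x r * (t ^ ((r : ℕ) + s) * x s) := by
    intro t
    rw [eval_ofFn, sq, Finset.sum_mul_sum]
    simp only [pow_add]
    exact Finset.sum_congr rfl fun r _ => Finset.sum_congr rfl fun s _ => by ring
  simp only [hsq, dotProduct, mulVec, momentMatrix, of_apply]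
  rw [integral_finsetSum fun r _ => Continuous.intervalIntegrable (by fun_prop) _ _]
  refine Finset.sum_congr rfl fun r _ => ?_
  rw [integral_finsetSum fun s _ => Continuous.intervalIntegrable (by fun_prop) _ _,
    Finset.mul_sum]
  refine Finset.sum_congr rfl fun s _ => ?_
  rw [integral_const_mul, integral_mul_const]

lemma posDef_momentMatrix {a b : ℝ} (hab : a < b) (n : ℕ) : (momentMatrix a b n).PosDef := by
  refine posDef_iff_dotProduct_mulVec.mpr ⟨?_, fun x hx => ?_⟩
  · ext r s
    simp [momentMatrix, add_comm]
  · rw [star_trivial, dotProduct_momentMatrix_mulVec]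
    exact integral_eval_sq_pos hab ((map_ne_zero_iff _ (injective_ofFn n)).mpr hx)

lemma integral_pow_neg_one_one (m : ℕ) :
    ∫ t in (-1 : ℝ)..1, t ^ m = (1 - (-1 : ℝ) ^ (m + 1)) / (m + 1) := by
  rw [integral_pow, one_pow]

theorem stmt_6 (k : ℕ) :
    0 < Matrix.det (fun r s : Fin (k + 1) =>
      (1 - (-1 : ℝ) ^ ((r : ℕ) + (s : ℕ) + 1)) / (2 * ((r : ℕ) + (s : ℕ) + 1))) := by
  have half_moments : (fun r s : Fin (k + 1) =>
      (1 - (-1 : ℝ) ^ ((r : ℕ) + (s : ℕ) + 1)) / (2 * ((r : ℕ) + (s : ℕ) + 1)))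
      = (1 / 2 : ℝ) • momentMatrix (-1) 1 (k + 1) := by
    ext r s
    rw [Matrix.smul_apply, momentMatrix, of_apply, integral_pow_neg_one_one, smul_eq_mul,
      one_div_mul_eq_div, div_div]
    push_cast
    ring
  rw [half_moments]
  exact ((posDef_momentMatrix (by norm_num) _).smul (by norm_num)).det_pos
end

section
/- For any u ≥ 1, the u×u matrix B_u with entries (B_u)_{p,q} = 1/(2(p+q)-1) has positive determinant. -/
/-!
The matrix is the Gram matrix of the odd monomials `t, t³, …, t^(2u-1)` in `L²[0,1]`, since
`∫₀¹ t^(2p+1) t^(2q+1) dt = 1/(2(p+q)+3)`. Its quadratic form at `x` is therefore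
`∫₀¹ P(t)² dt` for the polynomial `P = ∑ xₚ t^(2p+1)`, which is positive when `x ≠ 0`,
because then `P` is a nonzero polynomial and vanishes at only finitely many points.
So the matrix is positive definite, and its determinant is positive.
-/

open Polynomial Matrix

variable {ι : Type*} [Fintype ι]

/-- The Gram matrix of the monomials `t ^ a p` in `L²[0,1]`. -/
noncomputable def monomialGram (a : ι → ℕ) : Matrix ι ι ℝ :=
  of fun p q => 1 / ((a p + a q : ℕ) + 1 : ℝ)

lemma integral_pow_mul_pow_zero_one (m n : ℕ) :
    ∫ t in (0 : ℝ)..1, t ^ m * t ^ n = 1 / ((m + n : ℕ) + 1 : ℝ) := by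
  simp [← pow_add, integral_pow]

lemma dotProduct_monomialGram_mulVec (a : ι → ℕ) (x : ι → ℝ) :
    x ⬝ᵥ monomialGram a *ᵥ x = ∫ t in (0 : ℝ)..1, (∑ p, x p * t ^ a p) ^ 2 := by
  simp_rw [sq, Finset.sum_mul_sum, mul_mul_mul_comm]
  simp only [dotProduct, mulVec, monomialGram, of_apply, Finset.mul_sum]
  rw [intervalIntegral.integral_finsetSum fun p _ =>
    (by fun_prop : Continuous _).intervalIntegrable _ _]
  refine Finset.sum_congr rfl fun p _ => ?_
  rw [intervalIntegral.integral_finsetSum fun q _ =>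
    (by fun_prop : Continuous _).intervalIntegrable _ _]
  refine Finset.sum_congr rfl fun q _ => ?_
  rw [intervalIntegral.integral_const_mul, integral_pow_mul_pow_zero_one]
  ring

lemma sum_C_mul_X_pow_ne_zero {R : Type*} [Semiring R] {a : ι → ℕ} (ha : a.Injective)
    {x : ι → R} (hx : x ≠ 0) : ∑ p, C (x p) * X ^ a p ≠ 0 := by
  classical
  obtain ⟨p₀, hp₀⟩ := Function.ne_iff.mp hx
  intro h
  have hcoeff := congrArg (coeff · (a p₀)) h
  simp only [finsetSum_coeff, coeff_C_mul_X_pow, ha.eq_iff, Finset.sum_ite_eq,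
    Finset.mem_univ, if_true, coeff_zero] at hcoeff
  exact hp₀ hcoeff

lemma integral_sq_eval_pos {a b : ℝ} (hab : a < b) {P : ℝ[X]} (hP : P ≠ 0) :
    0 < ∫ t in a..b, P.eval t ^ 2 := by
  obtain ⟨c, hc, hPc⟩ :=
    ((Set.Icc_infinite hab).sdiff (finite_setOfPred_isRoot hP)).nonempty
  refine intervalIntegral.integral_pos hab (by fun_prop) (fun t _ => sq_nonneg _) ⟨c, hc, ?_⟩
  have hPc : P.eval c ≠ 0 := hPc
  positivity

theorem posDef_monomialGram {a : ι → ℕ} (ha : a.Injective) : (monomialGram a).PosDef := by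
  refine .of_dotProduct_mulVec_pos ?_ fun x hx => ?_
  · refine IsHermitian.ext fun p q => ?_
    simp [monomialGram, add_comm]
  · have hP := sum_C_mul_X_pow_ne_zero ha hx
    simpa [dotProduct_monomialGram_mulVec, eval_finsetSum] using
      integral_sq_eval_pos zero_lt_one hP

theorem stmt_7_general (u : ℕ) :
    0 < Matrix.det (fun p q : Fin u => (1 : ℝ) / (2 * ((p : ℕ) + (q : ℕ)) + 3)) := by
  have hodd : monomialGram (fun p : Fin u => 2 * (p : ℕ) + 1) =
      fun p q : Fin u => (1 : ℝ) / (2 * ((p : ℕ) + (q : ℕ)) + 3) := by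
    ext p q
    simp only [monomialGram, of_apply]
    push_cast
    ring
  rw [← hodd]
  exact (posDef_monomialGram fun p q h => Fin.ext (by omega)).det_pos

theorem stmt_7 (u : ℕ) (hu : 1 ≤ u) :
    0 < Matrix.det (fun p q : Fin u => (1 : ℝ) / (2 * ((p : ℕ) + (q : ℕ)) + 3)) :=
  stmt_7_general u
end

section
/- Let f be (n+1)-times differentiable on [a,b], x₀ ∈ (a,b), and 0 ≤ k ≤ n. For ε > 0 with [x₀-ε, x₀+ε] ⊆ [a,b], let P_{k,ε}(x) = Σ_{i=0}^k a_{i,ε}(x-x₀)^i be the unique polynomial of degree ≤ k minimizing ∫_{x₀-ε}^{x₀+ε} (f(x) - P(x))² dx over all real polynomials P of degree ≤ k. Then for each 0 ≤ i ≤ k, a_{i,ε} → f^{(i)}(x₀)/i! as ε → 0⁺. -/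
/-!
The Taylor polynomial `T` of degree `k` at `x₀` competes in the minimisation, so the best
approximation `P_ε` satisfies `‖f - P_ε‖ ≤ ‖f - T‖` in `L²(x₀ - ε, x₀ + ε)`, hence
`‖P_ε - T‖ ≤ 2 ‖f - T‖`, and Peano's form of Taylor's theorem makes `|f - T| = o(ε^k)` on the
interval. The substitution `x = x₀ + ε t` turns `‖P_ε - T‖²` into `ε` times the squared
`L²(-1, 1)` norm of the polynomial with coefficients `(a_{i,ε} - f^{(i)}(x₀)/i!) ε^i`. On the
finite-dimensional space of coefficient vectors that norm dominates the sup norm (compactness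
of the unit sphere), so `|a_{i,ε} - f^{(i)}(x₀)/i!| ε^i = o(ε^k)`, and `ε^k ≤ ε^i` for `ε ≤ 1`.
-/

open Polynomial Set Filter Topology MeasureTheory Asymptotics

lemma eval_sum_fin_C_mul_X_pow {N : ℕ} (w : Fin N → ℝ) (t : ℝ) :
    (∑ j : Fin N, C (w j) * X ^ (j : ℕ)).eval t = ∑ j : Fin N, w j * t ^ (j : ℕ) := by
  simp [eval_finsetSum]

lemma coeff_sum_fin_C_mul_X_pow {N : ℕ} (w : Fin N → ℝ) (j : Fin N) :
    (∑ i : Fin N, C (w i) * X ^ (i : ℕ)).coeff j = w j := by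
  simp [coeff_C_mul, coeff_X_pow, Fin.val_inj]

lemma exists_degree_le_eval_eq_sum_sub_pow {k : ℕ} (t : Fin (k + 1) → ℝ) (x₀ : ℝ) :
    ∃ Q : ℝ[X], Q.degree ≤ k ∧ ∀ x, Q.eval x = ∑ j, t j * (x - x₀) ^ (j : ℕ) := by
  set p : ℝ[X] := ∑ j : Fin (k + 1), C (t j) * X ^ (j : ℕ)
  refine ⟨p.comp (X - C x₀), ?_, fun x => by simp [p, eval_finsetSum]⟩
  rw [← natDegree_le_iff_degree_le, natDegree_comp, natDegree_X_sub_C, mul_one,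
    natDegree_le_iff_degree_le]
  exact Order.le_of_lt_succ (degree_sum_fin_lt t)

lemma integral_sq_sum_pow_pos {N : ℕ} {α β : ℝ} (hαβ : α < β) {w : Fin N → ℝ} (hw : w ≠ 0) :
    0 < ∫ t in α..β, (∑ j, w j * t ^ (j : ℕ)) ^ 2 := by
  set p : ℝ[X] := ∑ j : Fin N, C (w j) * X ^ (j : ℕ)
  have hp : p ≠ 0 := fun h => hw <| funext fun j => by
    rw [← coeff_sum_fin_C_mul_X_pow w j]
    change p.coeff j = 0
    rw [h, coeff_zero]
  obtain ⟨c, hc, hpc⟩ : ∃ c ∈ Icc α β, ¬ p.IsRoot c := by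
    by_contra! h
    exact hp (p.eq_zero_of_infinite_isRoot ((Icc_infinite hαβ).mono h))
  refine intervalIntegral.integral_pos hαβ (by fun_prop) (fun _ _ => sq_nonneg _) ⟨c, hc, ?_⟩
  rw [← eval_sum_fin_C_mul_X_pow]
  exact pow_pos (abs_pos.2 hpc) 2 |>.trans_eq (sq_abs _)

lemma exists_pos_mul_norm_sq_le_integral (N : ℕ) {α β : ℝ} (hαβ : α < β) :
    ∃ m > 0, ∀ w : Fin N → ℝ, m * ‖w‖ ^ 2 ≤ ∫ t in α..β, (∑ j, w j * t ^ (j : ℕ)) ^ 2 := by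
  set q : (Fin N → ℝ) → ℝ := fun w => ∫ t in α..β, (∑ j, w j * t ^ (j : ℕ)) ^ 2
  have hq_smul (s : ℝ) (w : Fin N → ℝ) : q (s • w) = s ^ 2 * q w := by
    simp only [q, ← intervalIntegral.integral_const_mul, Pi.smul_apply, smul_eq_mul, mul_assoc,
      ← Finset.mul_sum, mul_pow]
  rcases N with _ | N
  · exact ⟨1, one_pos, fun w => by simp [Subsingleton.elim w 0]⟩
  obtain ⟨u, hu, hmin⟩ := (isCompact_sphere (0 : Fin (N + 1) → ℝ) 1).exists_isMinOn
    (NormedSpace.sphere_nonempty.2 zero_le_one) (by fun_prop : Continuous q).continuousOn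
  refine ⟨q u, integral_sq_sum_pow_pos hαβ (ne_zero_of_mem_sphere one_ne_zero ⟨u, hu⟩), ?_⟩
  intro w
  rcases eq_or_ne w 0 with rfl | hw
  · simp [q]
  have hw' : ‖w‖⁻¹ • w ∈ Metric.sphere (0 : Fin (N + 1) → ℝ) 1 := by
    simp [norm_smul, norm_ne_zero_iff.2 hw]
  calc q u * ‖w‖ ^ 2 ≤ q (‖w‖⁻¹ • w) * ‖w‖ ^ 2 := by gcongr; exact hmin hw'
    _ = q w := by rw [hq_smul]; field_simp

lemma integral_sq_sum_sub_pow_eq {N : ℕ} (d : Fin N → ℝ) (x₀ ε : ℝ) :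
    ∫ x in (x₀ - ε)..(x₀ + ε), (∑ j, d j * (x - x₀) ^ (j : ℕ)) ^ 2 =
      ε * ∫ t in (-1 : ℝ)..1, (∑ j, d j * ε ^ (j : ℕ) * t ^ (j : ℕ)) ^ 2 := by
  rw [show x₀ - ε = ε * -1 + x₀ by ring, show x₀ + ε = ε * 1 + x₀ by ring,
    ← intervalIntegral.smul_integral_comp_mul_add, smul_eq_mul]
  simp only [add_sub_cancel_right, mul_pow, mul_assoc]

lemma exists_pos_mul_sq_le_integral_sq_sum_sub_pow (N : ℕ) :
    ∃ m > 0, ∀ (d : Fin N → ℝ) (x₀ : ℝ) {ε : ℝ}, 0 ≤ ε → ∀ j,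
      m * ε * (d j * ε ^ (j : ℕ)) ^ 2 ≤
        ∫ x in (x₀ - ε)..(x₀ + ε), (∑ i, d i * (x - x₀) ^ (i : ℕ)) ^ 2 := by
  obtain ⟨m, hm, hq⟩ := exists_pos_mul_norm_sq_le_integral N (neg_one_lt_zero.trans one_pos)
  refine ⟨m, hm, fun d x₀ ε hε j => ?_⟩
  set w : Fin N → ℝ := fun i => d i * ε ^ (i : ℕ)
  have hwj : w j ^ 2 ≤ ‖w‖ ^ 2 := by
    rw [← sq_abs, ← Real.norm_eq_abs]
    exact pow_le_pow_left₀ (norm_nonneg _) (norm_le_pi_norm w j) 2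
  rw [integral_sq_sum_sub_pow_eq, mul_comm m, mul_assoc]
  exact mul_le_mul_of_nonneg_left ((mul_le_mul_of_nonneg_left hwj hm.le).trans (hq w)) hε

lemma integral_sq_sub_le_four_mul {u v : ℝ → ℝ} {α β : ℝ} (hαβ : α ≤ β)
    (hu : ContinuousOn u (Icc α β)) (hv : ContinuousOn v (Icc α β))
    (h : ∫ x in α..β, v x ^ 2 ≤ ∫ x in α..β, u x ^ 2) :
    ∫ x in α..β, (u x - v x) ^ 2 ≤ 4 * ∫ x in α..β, u x ^ 2 := by
  have hi (g : ℝ → ℝ) (hg : ContinuousOn g (Icc α β)) : IntervalIntegrable g volume α β :=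
    hg.intervalIntegrable_of_Icc hαβ
  calc ∫ x in α..β, (u x - v x) ^ 2 ≤ ∫ x in α..β, (2 * u x ^ 2 + 2 * v x ^ 2) :=
        intervalIntegral.integral_mono_on hαβ (hi _ (by fun_prop)) (hi _ (by fun_prop))
          fun x _ => by nlinarith [sq_nonneg (u x + v x)]
    _ = (2 * ∫ x in α..β, u x ^ 2) + 2 * ∫ x in α..β, v x ^ 2 := by
        rw [intervalIntegral.integral_add (hi _ (by fun_prop)) (hi _ (by fun_prop)),
          intervalIntegral.integral_const_mul, intervalIntegral.integral_const_mul]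
    _ ≤ 4 * ∫ x in α..β, u x ^ 2 := by linarith

lemma integral_sq_le_of_abs_le {g : ℝ → ℝ} {α β M : ℝ} (hαβ : α ≤ β)
    (hg : ContinuousOn g (Icc α β)) (hM : ∀ x ∈ Icc α β, |g x| ≤ M) :
    ∫ x in α..β, g x ^ 2 ≤ (β - α) * M ^ 2 := by
  calc ∫ x in α..β, g x ^ 2 ≤ ∫ _ in α..β, M ^ 2 :=
        intervalIntegral.integral_mono_on hαβ ((hg.pow 2).intervalIntegrable_of_Icc hαβ)
          intervalIntegrable_const fun x hx =>
            (sq_abs (g x)).symm.trans_le (pow_le_pow_left₀ (abs_nonneg _) (hM x hx) 2)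
    _ = (β - α) * M ^ 2 := by rw [intervalIntegral.integral_const, smul_eq_mul]

theorem exists_pos_mul_sq_coeff_sub_le (k : ℕ) :
    ∃ m > 0, ∀ {f : ℝ → ℝ} {x₀ ε η : ℝ} (c t : Fin (k + 1) → ℝ), 0 < ε → ε ≤ 1 →
      ContinuousOn f (Icc (x₀ - ε) (x₀ + ε)) →
      (∀ x ∈ Icc (x₀ - ε) (x₀ + ε), |f x - ∑ i, t i * (x - x₀) ^ (i : ℕ)| ≤ η * ε ^ k) →
      (∫ x in (x₀ - ε)..(x₀ + ε), (f x - ∑ i, c i * (x - x₀) ^ (i : ℕ)) ^ 2) ≤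
        ∫ x in (x₀ - ε)..(x₀ + ε), (f x - ∑ i, t i * (x - x₀) ^ (i : ℕ)) ^ 2 →
      ∀ j, m * (c j - t j) ^ 2 ≤ 8 * η ^ 2 := by
  obtain ⟨m, hm, hcoer⟩ := exists_pos_mul_sq_le_integral_sq_sum_sub_pow (k + 1)
  refine ⟨m, hm, fun {f x₀ ε η} c t hε hε1 hf hT hbest j => ?_⟩
  have hle : x₀ - ε ≤ x₀ + ε := by linarith
  have hT_sq := integral_sq_le_of_abs_le hle (by fun_prop) hT
  have hPT := integral_sq_sub_le_four_mul hle (by fun_prop) (by fun_prop) hbest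
  have hPT_eq : ∫ x in (x₀ - ε)..(x₀ + ε), ((f x - ∑ i, t i * (x - x₀) ^ (i : ℕ)) -
      (f x - ∑ i, c i * (x - x₀) ^ (i : ℕ))) ^ 2 =
      ∫ x in (x₀ - ε)..(x₀ + ε), (∑ i, (c - t) i * (x - x₀) ^ (i : ℕ)) ^ 2 := by
    simp only [Pi.sub_apply, sub_mul, Finset.sum_sub_distrib, sub_sub_sub_cancel_left]
  have hεjk : (ε ^ k) ^ 2 ≤ (ε ^ (j : ℕ)) ^ 2 := pow_le_pow_left₀ (by positivity)
    (pow_le_pow_of_le_one hε.le hε1 (Nat.lt_succ_iff.1 j.isLt)) 2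
  refine le_of_mul_le_mul_right ?_ (by positivity : 0 < ε * (ε ^ (j : ℕ)) ^ 2)
  calc m * (c j - t j) ^ 2 * (ε * (ε ^ (j : ℕ)) ^ 2)
      = m * ε * ((c - t) j * ε ^ (j : ℕ)) ^ 2 := by rw [Pi.sub_apply]; ring
    _ ≤ 4 * ((x₀ + ε - (x₀ - ε)) * (η * ε ^ k) ^ 2) :=
        (hcoer (c - t) x₀ hε.le j).trans (hPT_eq ▸ hPT.trans (by gcongr))
    _ = 8 * η ^ 2 * (ε * (ε ^ k) ^ 2) := by ring
    _ ≤ 8 * η ^ 2 * (ε * (ε ^ (j : ℕ)) ^ 2) := by gcongr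

lemma isLittleO_sub_taylor {f : ℝ → ℝ} {s : Set ℝ} {x₀ : ℝ} {k : ℕ} (hs : IsOpen s)
    (hsc : Convex ℝ s) (hx₀ : x₀ ∈ s) (hf : ∀ i ≤ k, DifferentiableOn ℝ (iteratedDeriv i f) s) :
    (fun x => f x - ∑ i ∈ Finset.range (k + 1), iteratedDeriv i f x₀ / i.factorial * (x - x₀) ^ i)
      =o[𝓝 x₀] fun x => (x - x₀) ^ k := by
  have hcd : ContDiffOn ℝ k f s := contDiffOn_of_differentiableOn_deriv fun m hm =>
    (hf m (by exact_mod_cast hm)).congr (iteratedDerivWithin_of_isOpen hs)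
  have := taylor_isLittleO hsc hx₀ hcd
  rw [hs.nhdsWithin_eq hx₀] at this
  refine this.congr_left fun x => ?_
  rw [taylor_within_apply]
  congr 1
  refine Finset.sum_congr rfl fun i _ => ?_
  rw [iteratedDerivWithin_of_isOpen hs hx₀, smul_eq_mul]
  ring

lemma eventually_forall_Icc_abs_le_mul_pow {R : ℝ → ℝ} {x₀ η : ℝ} {k : ℕ}
    (h : R =o[𝓝 x₀] fun x => (x - x₀) ^ k) (hη : 0 < η) :
    ∀ᶠ ε in 𝓝[>] 0, ∀ x ∈ Icc (x₀ - ε) (x₀ + ε), |R x| ≤ η * ε ^ k := by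
  obtain ⟨ρ, hρ, hball⟩ := Metric.eventually_nhds_iff.1 (h.bound hη)
  filter_upwards [Ioo_mem_nhdsGT hρ] with ε hε x hx
  have hxε : |x - x₀| ≤ ε := abs_sub_le_iff.2 ⟨by linarith [hx.2], by linarith [hx.1]⟩
  calc |R x| ≤ η * |x - x₀| ^ k := by
        simpa [abs_pow] using hball (by rw [Real.dist_eq]; exact hxε.trans_lt hε.2)
    _ ≤ η * ε ^ k := by gcongr

lemma eventually_Icc_subset_Icc {a b x₀ : ℝ} (hx₀ : x₀ ∈ Ioo a b) :
    ∀ᶠ ε in 𝓝[>] 0, Icc (x₀ - ε) (x₀ + ε) ⊆ Icc a b := by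
  filter_upwards [Ioo_mem_nhdsGT (sub_pos.2 hx₀.1), Ioo_mem_nhdsGT (sub_pos.2 hx₀.2)]
    with ε ha hb
  exact Icc_subset_Icc (by linarith [ha.2]) (by linarith [hb.2])

theorem stmt_9 (a b x₀ : ℝ) (hx₀ : x₀ ∈ Set.Ioo a b) (n k : ℕ) (hk : k ≤ n) (f : ℝ → ℝ)
    (hdiff : ∀ i ≤ n, ∀ x ∈ Set.Icc a b,
      HasDerivAt (iteratedDeriv i f) (iteratedDeriv (i + 1) f x) x)
    (coef : ℝ → Fin (k + 1) → ℝ)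
    (hbest : ∀ ε : ℝ, 0 < ε → Set.Icc (x₀ - ε) (x₀ + ε) ⊆ Set.Icc a b →
      ∀ Q : Polynomial ℝ, Q.degree ≤ k →
        (∫ x in (x₀ - ε)..(x₀ + ε),
            (f x - ∑ i : Fin (k + 1), coef ε i * (x - x₀) ^ (i : ℕ)) ^ 2) ≤
          ∫ x in (x₀ - ε)..(x₀ + ε), (f x - Q.eval x) ^ 2) :
    ∀ i : Fin (k + 1),
      Filter.Tendsto (fun ε => coef ε i) (nhdsWithin 0 (Set.Ioi 0))
        (nhds (iteratedDeriv (i : ℕ) f x₀ / (Nat.factorial (i : ℕ)))) := by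
  intro i
  set t : Fin (k + 1) → ℝ := fun j => iteratedDeriv j f x₀ / (j : ℕ).factorial
  obtain ⟨m, hm, hcoef⟩ := exists_pos_mul_sq_coeff_sub_le k
  obtain ⟨Q, hQ, hQeval⟩ := exists_degree_le_eval_eq_sum_sub_pow t x₀
  have hf : ContinuousOn f (Icc a b) := fun x hx => by
    simpa using (hdiff 0 n.zero_le x hx).continuousAt.continuousWithinAt
  have htaylor : (fun x => f x - ∑ j, t j * (x - x₀) ^ (j : ℕ)) =o[𝓝 x₀]
      fun x => (x - x₀) ^ k := by
    refine (isLittleO_sub_taylor isOpen_Ioo (convex_Ioo a b) hx₀ fun j hj x hx =>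
      (hdiff j (hj.trans hk) x (Ioo_subset_Icc_self hx)).differentiableAt.differentiableWithinAt
      ).congr_left fun x => ?_
    rw [← Fin.sum_univ_eq_sum_range (fun j => iteratedDeriv j f x₀ / j.factorial * (x - x₀) ^ j)]
  rw [Metric.tendsto_nhds]
  intro r hr
  -- `η = √m * r / 4` makes `8 * η ^ 2 = m * r ^ 2 / 2`.
  filter_upwards [eventually_forall_Icc_abs_le_mul_pow htaylor (η := √m * r / 4) (by positivity),
    eventually_Icc_subset_Icc hx₀, Ioo_mem_nhdsGT one_pos] with ε hT hsub hε
  have hbestT := hbest ε hε.1 hsub Q hQ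
  simp only [hQeval] at hbestT
  have hsq := hcoef (coef ε) t hε.1 hε.2.le (hf.mono hsub) hT hbestT i
  rw [div_pow, mul_pow, Real.sq_sqrt hm.le] at hsq
  have hlt : m * (coef ε i - t i) ^ 2 < m * r ^ 2 :=
    hsq.trans_lt (by linarith [mul_pos hm (pow_pos hr 2)])
  rw [Real.dist_eq]
  exact abs_lt_of_sq_lt_sq (lt_of_mul_lt_mul_left hlt hm.le) hr.le
end
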